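/- Let π and ι be permutations of {1,…,n} of type (k,n) with ι ≤_∘ π, with lifts f, i ∈ Bound(k,n); set r = f⁻¹·i. If the Grassmannlike necklace 𝓘_{•,ι,π} is not a weakly separated collection, then there exists an affine transposition t with ℓ(t·r) < ℓ(r) and ℓ(t·i) < ℓ(i). -/

import Mathlib

open Finset

/-- `f` is an affine permutation of period `n`: an `n`-periodic bijection of `ℤ`. -/
def IsAffinePerm (n : ℕ) (f : Equiv.Perm ℤ) : Prop :=
  ∀ a : ℤ, f (a + n) = f a + n

/-- The length of an affine permutation of period `n`:
the number of pairs `(i, j)` with `i ∈ {1,…,n}`, `j ∈ ℤ`, `i < j` and `f i > f j`. -/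
noncomputable def aLen (n : ℕ) (f : Equiv.Perm ℤ) : ℕ :=
  Set.ncard {p : ℤ × ℤ | 1 ≤ p.1 ∧ p.1 ≤ (n : ℤ) ∧ p.1 < p.2 ∧ f p.2 < f p.1}

/-- `t` is the affine transposition `t_{a,b}` (period `n`): it swaps `a + jn` and `b + jn`
for all `j : ℤ` and fixes everything else; requires `a ≢ b (mod n)`. -/
def IsAffTranspAt (n : ℕ) (a b : ℤ) (t : Equiv.Perm ℤ) : Prop :=
  ¬ ((n : ℤ) ∣ b - a) ∧
    ∀ x : ℤ,
      ((n : ℤ) ∣ x - a → t x = x - a + b) ∧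
      ((n : ℤ) ∣ x - b → t x = x - b + a) ∧
      (¬ (n : ℤ) ∣ x - a → ¬ (n : ℤ) ∣ x - b → t x = x)

/-- `t` is an affine transposition of period `n`. -/
def IsAffTransp (n : ℕ) (t : Equiv.Perm ℤ) : Prop :=
  ∃ a b : ℤ, IsAffTranspAt n a b t

/-- The right associated reflections `T_R(f)`: affine transpositions `t` with `ℓ(f t) < ℓ(f)`. -/
def TR (n : ℕ) (f : Equiv.Perm ℤ) : Set (Equiv.Perm ℤ) :=
  {t | IsAffTransp n t ∧ aLen n (f * t) < aLen n f}

/-- The left associated reflections `T_L(f)`: affine transpositions `t` with `ℓ(t f) < ℓ(f)`. -/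
def TL (n : ℕ) (f : Equiv.Perm ℤ) : Set (Equiv.Perm ℤ) :=
  {t | IsAffTransp n t ∧ aLen n (t * f) < aLen n f}

/-- `u ≤_R f`: the factorization `f = u · (u⁻¹ f)` is length-additive. -/
def LeR (n : ℕ) (u f : Equiv.Perm ℤ) : Prop :=
  aLen n f = aLen n u + aLen n (u⁻¹ * f)

/-- `Bound k n`: bounded affine permutations, `a < f a ≤ a + n` with average shift `k`. -/
def Bound (k n : ℕ) : Set (Equiv.Perm ℤ) :=
  {f | IsAffinePerm n f ∧ (∀ a : ℤ, a < f a ∧ f a ≤ a + n) ∧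
    (∑ a ∈ Finset.Icc (1 : ℤ) (n : ℤ), (f a - a)) = (k : ℤ) * n}

/-- A permutation of `{1,…,n}` (modelled on `Fin n`) has type `(k,n)`:
`#{a : a ≤ π⁻¹ a} = k`. -/
def IsType (k n : ℕ) (π : Equiv.Perm (Fin n)) : Prop :=
  (Finset.univ.filter (fun a : Fin n => a ≤ π⁻¹ a)).card = k

/-- `f` is the lift of `π` : the affine permutation with `f a = π a` if `π a > a`
and `f a = π a + n` otherwise (identifying `v : Fin n` with the integer `v + 1 ∈ {1,…,n}`). -/
def IsLift (n : ℕ) (π : Equiv.Perm (Fin n)) (f : Equiv.Perm ℤ) : Prop :=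
  IsAffinePerm n f ∧ ∀ a : Fin n,
    f ((a.val : ℤ) + 1) =
      if (a.val : ℤ) < ((π a).val : ℤ) then ((π a).val : ℤ) + 1
      else ((π a).val : ℤ) + 1 + n

/-- The position of `a` in the cyclic (linear) order `<_i` on `Fin n` starting at `i`. -/
def cPos (n : ℕ) [NeZero n] (i a : Fin n) : ℕ := (a - i).val

/-- `a, b, c, d` is a cyclically ordered quadruple. -/
def CyclicOrdered (n : ℕ) [NeZero n] (a b c d : Fin n) : Prop :=
  0 < cPos n a b ∧ cPos n a b < cPos n a c ∧ cPos n a c < cPos n a d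

/-- Two subsets `I, J` of `Fin n` are weakly separated. -/
def WeaklySeparated (n : ℕ) [NeZero n] (I J : Finset (Fin n)) : Prop :=
  ¬ ∃ a b c d : Fin n, CyclicOrdered n a b c d ∧
      a ∈ I ∧ a ∉ J ∧ c ∈ I ∧ c ∉ J ∧ b ∈ J ∧ b ∉ I ∧ d ∈ J ∧ d ∉ I

/-- `(I_1,…,I_n)` (indexed by `Fin n`, cyclically) is a Grassmannlike necklace of type `(k,n)`
with removal permutation `ρ` and insertion permutation `ι`. -/
def IsGrassNecklace (n k : ℕ) [NeZero n] (I : Fin n → Finset (Fin n))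
    (ρ ι : Equiv.Perm (Fin n)) : Prop :=
  (∀ a : Fin n, (I a).card = k) ∧
    ∀ a : Fin n, ρ a ∈ I a ∧ I (a + 1) = insert (ι a) ((I a).erase (ρ a))

open Fin.NatCast in
/-- Auxiliary construction of the Grassmannlike necklace with removal `ρ` and insertion `ι`. -/
def neckAux (n : ℕ) [NeZero n] (ρ ι : Equiv.Perm (Fin n)) : ℕ → Finset (Fin n)
  | 0 => Finset.univ.filter (fun a : Fin n => ρ⁻¹ a ≤ ι⁻¹ a)
  | m + 1 => insert (ι (m : Fin n)) ((neckAux n ρ ι m).erase (ρ (m : Fin n)))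

/-- The Grassmannlike necklace with removal permutation `ρ` and insertion permutation `ι`:
its first term is `{a : ρ⁻¹ a ≤ ι⁻¹ a}` and `I_{a+1} = (I_a ∖ {ρ a}) ∪ {ι a}`.
The forward Grassmann necklace of `π` is `necklace n 1 π`; the reverse Grassmann
necklace of `π` is `necklace n π⁻¹ 1`. -/
def necklace (n : ℕ) [NeZero n] (ρ ι : Equiv.Perm (Fin n)) (j : Fin n) : Finset (Fin n) :=
  neckAux n ρ ι j.val

/-- The sorted list of positions (in the order `<_i`) of the elements of `S`. -/
def sortedShift (n : ℕ) [NeZero n] (i : Fin n) (S : Finset (Fin n)) : List ℕ :=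
  (S.image (fun a => cPos n i a)).sort (· ≤ ·)

/-- `S ≤_i T` componentwise on `<_i`-sorted lists. -/
def leCyc (n : ℕ) [NeZero n] (i : Fin n) (S T : Finset (Fin n)) : Prop :=
  List.Forall₂ (· ≤ ·) (sortedShift n i S) (sortedShift n i T)

/-- The positroid `𝓜_π` of `π` (via Oh's theorem, taken as the definition). -/
def positroid (k n : ℕ) [NeZero n] (π : Equiv.Perm (Fin n)) : Set (Finset (Fin n)) :=
  {S | S.card = k ∧ ∀ j : Fin n, leCyc n j (necklace n 1 π j) S}

/-- `v` lies strictly inside the arc from `w` clockwise to `x`. -/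
def InArc (n : ℕ) [NeZero n] (w v x : Fin n) : Prop :=
  0 < cPos n w v ∧ cPos n w v < cPos n w x

/-- The chords `w ↦ x` and `y ↦ z` are noncrossing: they do not intersect,
including at boundary vertices. -/
def Noncrossing (n : ℕ) [NeZero n] (w x y z : Fin n) : Prop :=
  w ≠ y ∧ w ≠ z ∧ x ≠ y ∧ x ≠ z ∧
    ¬ ((InArc n w y x ∧ InArc n x z w) ∨ (InArc n w z x ∧ InArc n x y w))

/-- The (distinct) chords `w ↦ x` and `y ↦ z` are crossing. -/
def Crossing (n : ℕ) [NeZero n] (w x y z : Fin n) : Prop :=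
  (w ≠ y ∨ x ≠ z) ∧ ¬ Noncrossing n w x y z

/-- The noncrossing chords `w ↦ x` and `y ↦ z` are aligned:
`w <_w y <_w z <_w x`, or `w <_w x <_w z <_w y`, or `w = x` and `w <_w y <_w z`. -/
def Aligned (n : ℕ) [NeZero n] (w x y z : Fin n) : Prop :=
  Noncrossing n w x y z ∧
    ((0 < cPos n w y ∧ cPos n w y < cPos n w z ∧ cPos n w z < cPos n w x) ∨
     (0 < cPos n w x ∧ cPos n w x < cPos n w z ∧ cPos n w z < cPos n w y) ∨
     (w = x ∧ 0 < cPos n w y ∧ cPos n w y < cPos n w z))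

/-- A noncrossing toggle relating two Grassmannlike necklaces, each encoded by its pair
(removal permutation, insertion permutation): at some position `p`, the toggle is defined
(`ρ(p-1) ≠ ι(p)` and `ρ(p) ≠ ι(p-1)`), the chords `ρ(p-1) ↦ ι(p-1)` and `ρ(p) ↦ ι(p)`
are noncrossing, and the new permutations are obtained by right multiplication by the
transposition of positions `p-1, p`. -/
def NoncrossingToggle (n : ℕ) [NeZero n]
    (N N' : Equiv.Perm (Fin n) × Equiv.Perm (Fin n)) : Prop :=
  ∃ p : Fin n,
    N.1 (p - 1) ≠ N.2 p ∧ N.1 p ≠ N.2 (p - 1) ∧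
    Noncrossing n (N.1 (p - 1)) (N.2 (p - 1)) (N.1 p) (N.2 p) ∧
    N'.1 = N.1 * Equiv.swap (p - 1) p ∧ N'.2 = N.2 * Equiv.swap (p - 1) p

/-- The Plücker coordinate `Δ_I(M)`: the determinant of the `k × k` submatrix of `M`
on the columns indexed by `I` (in increasing order); junk value `0` if `I.card ≠ k`. -/
noncomputable def plucker (k n : ℕ) (M : Matrix (Fin k) (Fin n) ℂ) (I : Finset (Fin n)) : ℂ :=
  if h : I.card = k then
    Matrix.det (Matrix.of (fun r c : Fin k => M r ((I.orderIsoOfFin h) c).1))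
  else 0

/-- The matrix cone `Π°_π` over the open positroid variety of `π`: full-rank `k × n`
matrices with `Δ_J = 0` for `J ∉ 𝓜_π` and nonvanishing forward-necklace Plücker coordinates. -/
def openPos (k n : ℕ) [NeZero n] (π : Equiv.Perm (Fin n)) : Set (Matrix (Fin k) (Fin n) ℂ) :=
  {M | M.rank = k ∧
    (∀ J : Finset (Fin n), J.card = k → J ∉ positroid k n π → plucker k n M J = 0) ∧
    (∀ j : Fin n, plucker k n M (necklace n 1 π j) ≠ 0)}

/-- `N` is the right twist of `M` along the necklace `I` with removal permutation `ρ`: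
for all `a` and all `b ∈ I a`, `⟨N_a, M_b⟩ = δ_{b, ρ a}`. -/
def IsRightTwist (k n : ℕ) (I : Fin n → Finset (Fin n)) (ρ : Equiv.Perm (Fin n))
    (M N : Matrix (Fin k) (Fin n) ℂ) : Prop :=
  ∀ a : Fin n, ∀ b ∈ I a, (∑ j : Fin k, N j a * M j b) = if b = ρ a then 1 else 0

/-- `N` is the left twist of `M` along the necklace `I` with insertion permutation `ι`:
for all `a` and all `b ∈ I (a+1)`, `⟨N_a, M_b⟩ = δ_{b, ι a}`. -/
def IsLeftTwist (k n : ℕ) [NeZero n] (I : Fin n → Finset (Fin n)) (ι : Equiv.Perm (Fin n))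
    (M N : Matrix (Fin k) (Fin n) ℂ) : Prop :=
  ∀ a : Fin n, ∀ b ∈ I (a + 1), (∑ j : Fin k, N j a * M j b) = if b = ι a then 1 else 0

/-!
Put `g = i⁻¹ f i`. Because `i ≤_R f`, a pair of integers that `f` keeps in order is also kept in
order by `i⁻¹ f`; applied to the pairs `(f⁻¹ (i z), i z)` and `(i z, f⁻¹ (i z + n))` this gives
`z < g z ≤ z + n`, so `g` is the bounded lift of `ι⁻¹ π ι`. The necklace `𝓘_{•,ι,π}` is then
described by the arcs `[p, g p)`: `c ∈ I_m` iff `m` lies in an arc whose start `p` satisfies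
`p ≡ i⁻¹ c (mod n)`.

If `A, C ∈ I_v ∖ I_w` and `B, D ∈ I_w ∖ I_v`, the arcs of `A, C` through `v` and of `B, D`
through `w` give positions `q < p < q + n` with `g q < g p < g q + n`. Were all these pairs
`(q, p)` and `(p, q + n)` non-inversions of `i`, the values of `i` at the `A, C` positions would
lie above those at the `B, D` positions within a single period, which is impossible for a
cyclically alternating quadruple. So there are `x < y` with `g x < g y` and `i y < i x`, and
`t = t_{i y, i x}` shortens both `i` and `r = f⁻¹ i`, since `i⁻¹` and `r⁻¹ = i⁻¹ f` both invert
the values `i y < i x`.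
-/

section

variable {n : ℕ}

theorem Int.ModEq.eq_of_abs_lt {m a b : ℤ} (h : a ≡ b [ZMOD m]) (hab : |b - a| < m) : a = b :=
  (sub_eq_zero.mp (Int.eq_zero_of_abs_lt_dvd h.dvd hab)).symm

theorem Int.ModEq.le_sub_of_lt {m a b : ℤ} (h : a ≡ b [ZMOD m]) (hab : a < b) : a ≤ b - m := by
  have := Int.le_of_dvd (by linarith) h.dvd
  linarith

theorem Int.emod_eq_of_modEq {m a r : ℤ} (h : a ≡ r [ZMOD m]) (h0 : 0 ≤ r) (h1 : r < m) :
    a % m = r :=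
  Eq.trans h (Int.emod_eq_of_lt h0 h1)

section OneBased

def oneBased (a : Fin n) : ℤ := a.val + 1

lemma one_le_oneBased (a : Fin n) : 1 ≤ oneBased a := by
  simp [oneBased]

lemma oneBased_le (a : Fin n) : oneBased a ≤ n := by
  have := a.isLt
  simp only [oneBased]
  omega

lemma oneBased_modEq_iff {a b : Fin n} : oneBased a ≡ oneBased b [ZMOD n] ↔ a = b := by
  refine ⟨fun h => Fin.ext ?_, fun h => h ▸ Int.ModEq.rfl⟩
  have := a.isLt
  have := b.isLt
  have := h.eq_of_abs_lt (by simp only [oneBased]; rw [abs_lt]; constructor <;> omega)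
  simpa [oneBased] using this

lemma exists_oneBased_modEq [NeZero n] (x : ℤ) : ∃ a : Fin n, x ≡ oneBased a [ZMOD n] := by
  have hn : (0 : ℤ) < n := by exact_mod_cast Nat.pos_of_neZero n
  have h0 := Int.emod_nonneg (x - 1) hn.ne'
  have h1 := Int.emod_lt_of_pos (x - 1) hn
  refine ⟨⟨((x - 1) % n).toNat, by omega⟩, ?_⟩
  simp only [oneBased, Int.toNat_of_nonneg h0]
  simpa using ((Int.mod_modEq (x - 1) n).add_right 1).symm

open Fin.NatCast in
lemma oneBased_natCast_modEq [NeZero n] (m : ℕ) : oneBased (m : Fin n) ≡ m + 1 [ZMOD n] := by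
  simp only [oneBased, Fin.val_natCast, Int.natCast_mod]
  exact (Int.mod_modEq _ _).add_right 1

lemma cPos_eq_emod [NeZero n] (a b : Fin n) :
    (cPos n a b : ℤ) = (oneBased b - oneBased a) % n := by
  rw [cPos, Fin.val_sub, Int.natCast_mod, Nat.cast_add, Nat.cast_sub a.isLt.le,
    show (n : ℤ) - a.val + b.val = (oneBased b - oneBased a) + n by simp only [oneBased]; ring,
    Int.add_emod_right]

end OneBased

namespace IsAffinePerm

variable {w v : Equiv.Perm ℤ}

lemma map_add_mul (hw : IsAffinePerm n w) (x j : ℤ) : w (x + j * n) = w x + j * n := by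
  induction j using Int.induction_on with
  | zero => simp
  | succ k ih => rw [add_one_mul, ← add_assoc, hw, ih, add_assoc]
  | pred k ih =>
    have := hw (x + (-(k : ℤ) - 1) * n)
    rw [show x + (-(k : ℤ) - 1) * n + n = x + -(k : ℤ) * n by ring, ih] at this
    linarith

lemma map_add_of_dvd (hw : IsAffinePerm n w) (x : ℤ) {d : ℤ} (hd : (n : ℤ) ∣ d) :
    w (x + d) = w x + d := by
  obtain ⟨j, rfl⟩ := hd
  rw [mul_comm, hw.map_add_mul]

lemma inv (hw : IsAffinePerm n w) : IsAffinePerm n w⁻¹ := fun a => by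
  rw [Equiv.Perm.inv_eq_iff_eq, hw]
  simp

lemma mul (hw : IsAffinePerm n w) (hv : IsAffinePerm n v) : IsAffinePerm n (w * v) := fun a => by
  simp only [Equiv.Perm.mul_apply, hv a, hw (v a)]

lemma modEq_of_modEq (hw : IsAffinePerm n w) {x y : ℤ} (h : x ≡ y [ZMOD n]) :
    w x ≡ w y [ZMOD n] := by
  rw [show y = x + (y - x) by ring, hw.map_add_of_dvd x h.dvd]
  exact Int.modEq_iff_dvd.mpr (by simpa using h.dvd)

lemma modEq_iff (hw : IsAffinePerm n w) {x y : ℤ} : w x ≡ w y [ZMOD n] ↔ x ≡ y [ZMOD n] :=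
  ⟨fun h => by simpa using hw.inv.modEq_of_modEq h, hw.modEq_of_modEq⟩

lemma sub_eq_of_modEq (hw : IsAffinePerm n w) {x y : ℤ} (h : x ≡ y [ZMOD n]) :
    w x - x = w y - y := by
  rw [show y = x + (y - x) by ring, hw.map_add_of_dvd x h.dvd]
  ring

end IsAffinePerm

section Lifts

variable {π ι σ : Equiv.Perm (Fin n)} {f i g : Equiv.Perm ℤ}

lemma IsLift.apply_oneBased_modEq (hf : IsLift n π f) (a : Fin n) :
    f (oneBased a) ≡ oneBased (π a) [ZMOD n] := by
  have h := hf.2 a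
  split_ifs at h
  · exact h ▸ Int.ModEq.rfl
  · exact h ▸ Int.add_modEq_right

lemma IsLift.apply_modEq (hf : IsLift n π f) {x : ℤ} {a : Fin n}
    (h : x ≡ oneBased a [ZMOD n]) : f x ≡ oneBased (π a) [ZMOD n] :=
  (hf.1.modEq_of_modEq h).trans (hf.apply_oneBased_modEq a)

lemma IsLift.inv_apply_modEq (hf : IsLift n π f) {y : ℤ} {b : Fin n}
    (h : y ≡ oneBased b [ZMOD n]) : f⁻¹ y ≡ oneBased (π⁻¹ b) [ZMOD n] := by
  have := hf.apply_oneBased_modEq (π⁻¹ b)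
  rw [← hf.1.modEq_iff]
  simp only [Equiv.Perm.coe_inv, Equiv.apply_symm_apply] at this ⊢
  exact h.trans this.symm

lemma IsLift.bounded [NeZero n] (hf : IsLift n π f) (x : ℤ) : x < f x ∧ f x ≤ x + n := by
  obtain ⟨a, ha⟩ := exists_oneBased_modEq (n := n) x
  have hdisp := hf.1.sub_eq_of_modEq ha
  have hfa := hf.2 a
  have := (π a).isLt
  have := a.isLt
  unfold oneBased at hdisp hfa
  split_ifs at hfa <;> omega

lemma isLift_of_modEq (hg : IsAffinePerm n g) (hb : ∀ x, x < g x ∧ g x ≤ x + n)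
    (hσ : ∀ a, g (oneBased a) ≡ oneBased (σ a) [ZMOD n]) : IsLift n σ g := by
  refine ⟨hg, fun a => ?_⟩
  have := hb (oneBased a)
  have := (σ a).isLt
  have := a.isLt
  unfold oneBased at *
  split_ifs
  · exact (hσ a).eq_of_abs_lt (by rw [abs_lt]; constructor <;> omega)
  · exact ((hσ a).trans Int.add_modEq_right.symm).eq_of_abs_lt
      (by rw [abs_lt]; constructor <;> omega)

lemma IsLift.conj (hf : IsLift n π f) (hi : IsLift n ι i)
    (hb : ∀ x, x < (i⁻¹ * f * i) x ∧ (i⁻¹ * f * i) x ≤ x + n) :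
    IsLift n (ι⁻¹ * π * ι) (i⁻¹ * f * i) :=
  isLift_of_modEq ((hi.1.inv.mul hf.1).mul hi.1) hb fun a =>
    hi.inv_apply_modEq (hf.apply_modEq (hi.apply_oneBased_modEq a))

end Lifts
section Inversions

def invPairs (w : Equiv.Perm ℤ) : Set (ℤ × ℤ) := {p | p.1 < p.2 ∧ w p.2 < w p.1}

def window (n : ℕ) : Set (ℤ × ℤ) := {p | 1 ≤ p.1 ∧ p.1 ≤ n}

def diagShift (n : ℕ) (j : ℤ) (p : ℤ × ℤ) : ℤ × ℤ := (p.1 + j * n, p.2 + j * n)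

def IsDiagPeriodic (n : ℕ) (S : Set (ℤ × ℤ)) : Prop := ∀ j p, diagShift n j p ∈ S ↔ p ∈ S

def toWindow (n : ℕ) (p : ℤ × ℤ) : ℤ × ℤ := diagShift n (-((p.1 - 1) / n)) p

lemma aLen_eq_ncard (w : Equiv.Perm ℤ) : aLen n w = (window n ∩ invPairs w).ncard := by
  unfold aLen
  congr 1
  ext p
  simp [window, invPairs, and_assoc]

lemma toWindow_mem (hn : 0 < n) (p : ℤ × ℤ) : toWindow n p ∈ window n := by
  have hN : (0 : ℤ) < n := by exact_mod_cast hn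
  have := Int.mul_ediv_add_emod (p.1 - 1) n
  have := Int.emod_nonneg (p.1 - 1) hN.ne'
  have := Int.emod_lt_of_pos (p.1 - 1) hN
  simp only [toWindow, diagShift, window, Set.mem_ofPred_eq]
  constructor <;> linarith

lemma toWindow_eq_self {p : ℤ × ℤ} (hp : p ∈ window n) : toWindow n p = p := by
  rw [toWindow, Int.ediv_eq_zero_of_lt (by linarith [hp.1]) (by linarith [hp.2])]
  simp [diagShift]

lemma toWindow_diagShift (hn : 0 < n) (j : ℤ) (p : ℤ × ℤ) :
    toWindow n (diagShift n j p) = toWindow n p := by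
  have hN : (n : ℤ) ≠ 0 := by exact_mod_cast hn.ne'
  simp only [toWindow, diagShift, Prod.mk.injEq]
  rw [show p.1 + j * n - 1 = p.1 - 1 + j * n by ring, Int.add_mul_ediv_right _ _ hN]
  constructor <;> ring

lemma exists_diagShift_of_toWindow_eq {p q : ℤ × ℤ} (h : toWindow n p = toWindow n q) :
    ∃ j, p = diagShift n j q := by
  refine ⟨(p.1 - 1) / n - (q.1 - 1) / n, ?_⟩
  simp only [toWindow, diagShift, Prod.ext_iff] at h ⊢
  exact ⟨by linear_combination h.1, by linear_combination h.2⟩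

lemma IsDiagPeriodic.inter {S T : Set (ℤ × ℤ)} (hS : IsDiagPeriodic n S)
    (hT : IsDiagPeriodic n T) : IsDiagPeriodic n (S ∩ T) :=
  fun j p => and_congr (hS j p) (hT j p)

lemma IsDiagPeriodic.sdiff {S T : Set (ℤ × ℤ)} (hS : IsDiagPeriodic n S)
    (hT : IsDiagPeriodic n T) : IsDiagPeriodic n (S \ T) :=
  fun j p => and_congr (hS j p) (not_congr (hT j p))

lemma IsAffinePerm.isDiagPeriodic_invPairs {w : Equiv.Perm ℤ} (hw : IsAffinePerm n w) :
    IsDiagPeriodic n (invPairs w) := fun j p => by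
  simp [invPairs, diagShift, hw.map_add_mul]

lemma IsAffinePerm.finite_window_inter_invPairs [NeZero n] {w : Equiv.Perm ℤ}
    (hw : IsAffinePerm n w) : (window n ∩ invPairs w).Finite := by
  set B := ∑ x ∈ Finset.Icc (1 : ℤ) n, |w x - x|
  have hB : ∀ x, |w x - x| ≤ B := by
    intro x
    obtain ⟨a, ha⟩ := exists_oneBased_modEq (n := n) x
    rw [hw.sub_eq_of_modEq ha]
    exact Finset.single_le_sum (f := fun x => |w x - x|) (fun _ _ => abs_nonneg _)
      (Finset.mem_Icc.mpr ⟨one_le_oneBased a, oneBased_le a⟩)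
  refine (Finset.Icc (1 : ℤ) n ×ˢ Finset.Icc (1 : ℤ) (n + 2 * B)).finite_toSet.subset ?_
  rintro ⟨x, y⟩ ⟨⟨hx1, hxn⟩, hxy, hwxy⟩
  have := abs_le.mp (hB x)
  have := abs_le.mp (hB y)
  simp only [Finset.coe_product, Set.mem_prod, Finset.coe_Icc, Set.mem_Icc] at *
  omega

section Counting

variable {S T : Set (ℤ × ℤ)} {ψ : ℤ × ℤ → ℤ × ℤ}

lemma mapsTo_toWindow_comp (hn : 0 < n) (hT : IsDiagPeriodic n T) (hmaps : Set.MapsTo ψ S T) :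
    Set.MapsTo (toWindow n ∘ ψ) (window n ∩ S) (window n ∩ T) :=
  fun _ hp => ⟨toWindow_mem hn _, (hT _ _).mpr (hmaps hp.2)⟩

lemma injOn_toWindow_comp (hn : 0 < n) (hS : IsDiagPeriodic n S)
    (hψ : ∀ j p, ψ (diagShift n j p) = diagShift n j (ψ p)) (hinj : Set.InjOn ψ S) :
    Set.InjOn (toWindow n ∘ ψ) (window n ∩ S) := by
  intro p hp q hq h
  obtain ⟨j, hj⟩ := exists_diagShift_of_toWindow_eq h
  rw [← hψ] at hj
  have := hinj hp.2 ((hS j q).mpr hq.2) hj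
  rw [← toWindow_eq_self hp.1, ← toWindow_eq_self hq.1, this, toWindow_diagShift hn]

lemma ncard_window_inter_le (hn : 0 < n) (hS : IsDiagPeriodic n S) (hT : IsDiagPeriodic n T)
    (hfin : (window n ∩ T).Finite) (hψ : ∀ j p, ψ (diagShift n j p) = diagShift n j (ψ p))
    (hmaps : Set.MapsTo ψ S T) (hinj : Set.InjOn ψ S) :
    (window n ∩ S).ncard ≤ (window n ∩ T).ncard :=
  Set.ncard_le_ncard_of_injOn _ (mapsTo_toWindow_comp hn hT hmaps)
    (injOn_toWindow_comp hn hS hψ hinj) hfin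

lemma ncard_window_inter_lt (hn : 0 < n) (hS : IsDiagPeriodic n S) (hT : IsDiagPeriodic n T)
    (hfin : (window n ∩ T).Finite) (hψ : ∀ j p, ψ (diagShift n j p) = diagShift n j (ψ p))
    (hmaps : Set.MapsTo ψ S T) (hinj : Set.InjOn ψ S) {q : ℤ × ℤ} (hq : q ∈ T)
    (hmiss : ∀ p ∈ S, ∀ j, ψ p ≠ diagShift n j q) :
    (window n ∩ S).ncard < (window n ∩ T).ncard := by
  have hmaps' : Set.MapsTo (toWindow n ∘ ψ) (window n ∩ S) ((window n ∩ T) \ {toWindow n q}) := by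
    intro p hp
    refine ⟨mapsTo_toWindow_comp hn hT hmaps hp, fun h => ?_⟩
    obtain ⟨j, hj⟩ := exists_diagShift_of_toWindow_eq h
    exact hmiss p hp.2 j hj
  calc (window n ∩ S).ncard
      ≤ ((window n ∩ T) \ {toWindow n q}).ncard :=
        Set.ncard_le_ncard_of_injOn _ hmaps' (injOn_toWindow_comp hn hS hψ hinj) hfin.sdiff
    _ < (window n ∩ T).ncard :=
        Set.ncard_sdiff_singleton_lt_of_mem ⟨toWindow_mem hn q, (hT _ _).mpr hq⟩ hfin

end Counting

/-- An inversion of `a * b` is either an inversion of `b` or is sent by `b` to an inversion of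
`a`; the inversion `(x, y)` of `b` is not an inversion of `a * b`. -/
lemma aLen_mul_lt_add [NeZero n] {a b : Equiv.Perm ℤ} (ha : IsAffinePerm n a)
    (hb : IsAffinePerm n b) {x y : ℤ} (hxy : x < y) (hbxy : b y < b x)
    (habxy : a (b x) < a (b y)) : aLen n (a * b) < aLen n a + aLen n b := by
  have hn := Nat.pos_of_neZero n
  have hAB := (ha.mul hb).isDiagPeriodic_invPairs
  have hB := hb.isDiagPeriodic_invPairs
  have hcommon : (window n ∩ (invPairs (a * b) ∩ invPairs b)).ncard < aLen n b := by
    rw [aLen_eq_ncard]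
    refine ncard_window_inter_lt hn (hAB.inter hB) hB hb.finite_window_inter_invPairs
      (ψ := id) (fun _ _ => rfl) (fun _ hp => hp.2) (Set.injOn_id _) (q := (x, y)) ⟨hxy, hbxy⟩ ?_
    rintro p ⟨hp, -⟩ j rfl
    exact (lt_asymm habxy) ((hAB j (x, y)).mp hp).2
  have hrest : (window n ∩ (invPairs (a * b) \ invPairs b)).ncard ≤ aLen n a := by
    rw [aLen_eq_ncard]
    refine ncard_window_inter_le hn (hAB.sdiff hB) ha.isDiagPeriodic_invPairs
      ha.finite_window_inter_invPairs (ψ := fun p => (b p.1, b p.2))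
      (fun j p => by simp [diagShift, hb.map_add_mul]) ?_ ?_
    · rintro p ⟨⟨hp, hap⟩, hnb⟩
      have hne : b p.1 ≠ b p.2 := b.injective.ne hp.ne
      exact ⟨lt_of_le_of_ne (not_lt.mp fun h => hnb ⟨hp, h⟩) hne, hap⟩
    · intro p _ q _ h
      simp only [Prod.mk.injEq, b.injective.eq_iff] at h
      exact Prod.ext h.1 h.2
  calc aLen n (a * b)
      ≤ (window n ∩ (invPairs (a * b) ∩ invPairs b)).ncard
        + (window n ∩ (invPairs (a * b) \ invPairs b)).ncard := by
        rw [aLen_eq_ncard]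
        convert Set.ncard_union_le _ _ using 2
        rw [← Set.inter_union_distrib_left, Set.inter_union_sdiff]
    _ < aLen n a + aLen n b := by omega

end Inversions

section LeR

variable [NeZero n] {u f : Equiv.Perm ℤ}

lemma LeR.inv_apply_lt_of_lt (hle : LeR n u f) (hu : IsAffinePerm n u) (hf : IsAffinePerm n f)
    {x y : ℤ} (hxy : x < y) (hfxy : f x < f y) : u⁻¹ (f x) < u⁻¹ (f y) := by
  by_contra h
  have hne : u⁻¹ (f y) ≠ u⁻¹ (f x) := (u⁻¹.injective.comp f.injective).ne hxy.ne'
  have := aLen_mul_lt_add hu (hu.inv.mul hf) hxy (lt_of_le_of_ne (not_lt.mp h) hne)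
    (by simpa using hfxy)
  rw [mul_inv_cancel_left] at this
  exact this.ne hle

lemma LeR.conj_bounded (hle : LeR n u f) (hu : IsAffinePerm n u) (hf : IsAffinePerm n f)
    (hfb : ∀ x, x < f x ∧ f x ≤ x + n) (z : ℤ) :
    z < (u⁻¹ * f * u) z ∧ (u⁻¹ * f * u) z ≤ z + n := by
  simp only [Equiv.Perm.mul_apply]
  constructor
  · have hx : f⁻¹ (u z) < u z := by simpa using (hfb (f⁻¹ (u z))).1
    simpa using hle.inv_apply_lt_of_lt hu hf hx (by simpa using (hfb (u z)).1)
  · have hshift : u⁻¹ (u z + n) = z + n := by simpa using hu.inv (u z)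
    by_cases hmax : f (u z) = u z + n
    · rw [hmax, hshift]
    have hy : u z < f⁻¹ (u z + n) := by
      have := (hfb (f⁻¹ (u z + n))).2
      have hne : f⁻¹ (u z + n) ≠ u z := fun h => hmax (by simpa using (congrArg f h).symm)
      simp only [Equiv.Perm.coe_inv, Equiv.apply_symm_apply] at this hne ⊢
      omega
    have := hle.inv_apply_lt_of_lt hu hf hy (by simpa using lt_of_le_of_ne (hfb (u z)).2 hmax)
    simp only [Equiv.Perm.coe_inv, Equiv.apply_symm_apply] at this hshift ⊢
    rw [hshift] at this
    exact this.le

end LeR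

section AffTransp

variable {a b u v x y : ℤ} {s t w : Equiv.Perm ℤ}

lemma exists_isAffTranspAt (h : ¬ (n : ℤ) ∣ b - a) : ∃ t, IsAffTranspAt n a b t := by
  have hab : ∀ z, (n : ℤ) ∣ z - a → ¬ (n : ℤ) ∣ z - b := fun z ha hb =>
    h (by simpa using dvd_sub ha hb)
  let τ : ℤ → ℤ := fun z =>
    if (n : ℤ) ∣ z - a then z - a + b else if (n : ℤ) ∣ z - b then z - b + a else z
  have hτ : Function.Involutive τ := by
    intro z
    by_cases ha : (n : ℤ) ∣ z - a
    · have hb : (n : ℤ) ∣ z - a + b - b := by simpa using ha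
      simp only [τ, if_pos ha, if_neg fun h' => hab _ h' hb, if_pos hb]
      ring
    · by_cases hb : (n : ℤ) ∣ z - b
      · have ha' : (n : ℤ) ∣ z - b + a - a := by simpa using hb
        simp only [τ, if_neg ha, if_pos hb, if_pos ha']
        ring
      · simp only [τ, if_neg ha, if_neg hb]
  refine ⟨hτ.toPerm τ, h, fun z => ⟨fun ha => if_pos ha, fun hb => ?_, fun ha hb => ?_⟩⟩
  · exact (if_neg fun ha => hab z ha hb).trans (if_pos hb)
  · exact (if_neg ha).trans (if_neg hb)

namespace IsAffTranspAt

lemma symm (ht : IsAffTranspAt n a b t) : IsAffTranspAt n b a t :=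
  ⟨fun h => ht.1 (dvd_sub_comm.mp h),
    fun x => ⟨(ht.2 x).2.1, (ht.2 x).1, fun h1 h2 => (ht.2 x).2.2 h2 h1⟩⟩

lemma apply_left (ht : IsAffTranspAt n a b t) : t a = b := by
  simpa using (ht.2 a).1 (by simp)

lemma apply_apply (ht : IsAffTranspAt n a b t) (x : ℤ) : t (t x) = x := by
  by_cases ha : (n : ℤ) ∣ x - a
  · rw [(ht.2 x).1 ha, (ht.2 _).2.1 (by simpa using ha)]
    ring
  by_cases hb : (n : ℤ) ∣ x - b
  · rw [(ht.2 x).2.1 hb, (ht.2 _).1 (by simpa using hb)]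
    ring
  rw [(ht.2 x).2.2 ha hb, (ht.2 x).2.2 ha hb]

lemma isAffinePerm (ht : IsAffTranspAt n a b t) : IsAffinePerm n t := fun x => by
  have e : ∀ c, (n : ℤ) ∣ x + n - c ↔ (n : ℤ) ∣ x - c := fun c => by
    rw [show x + n - c = x - c + n by ring]
    exact dvd_add_self_right
  by_cases ha : (n : ℤ) ∣ x - a
  · rw [(ht.2 _).1 ((e a).mpr ha), (ht.2 x).1 ha]
    ring
  by_cases hb : (n : ℤ) ∣ x - b
  · rw [(ht.2 _).2.1 ((e b).mpr hb), (ht.2 x).2.1 hb]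
    ring
  rw [(ht.2 _).2.2 (mt (e a).mp ha) (mt (e b).mp hb), (ht.2 x).2.2 ha hb]

lemma conj (ht : IsAffTranspAt n a b t) (hw : IsAffinePerm n w) :
    IsAffTranspAt n (w⁻¹ a) (w⁻¹ b) (w⁻¹ * t * w) := by
  have key : ∀ x c, (n : ℤ) ∣ x - w⁻¹ c ↔ (n : ℤ) ∣ w x - c := fun x c => by
    rw [← Int.modEq_iff_dvd, ← Int.modEq_iff_dvd, ← hw.modEq_iff]
    simp
  have hdisp : ∀ x c, (n : ℤ) ∣ x - w⁻¹ c → w x - c = x - w⁻¹ c := fun x c hx => by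
    have := hw.sub_eq_of_modEq (Int.modEq_iff_dvd.mpr hx)
    simp only [Equiv.Perm.coe_inv, Equiv.apply_symm_apply] at this ⊢
    linarith
  have hshift : ∀ c d, (n : ℤ) ∣ d → w⁻¹ (c + d) = w⁻¹ c + d := fun c d hd =>
    hw.inv.map_add_of_dvd c hd
  refine ⟨fun h => ht.1 ?_, fun x => ⟨fun hx => ?_, fun hx => ?_, fun hxa hxb => ?_⟩⟩
  · simpa using (key (w⁻¹ b) a).mp h
  · rw [Equiv.Perm.mul_apply, Equiv.Perm.mul_apply, (ht.2 _).1 ((key x a).mp hx),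
      hdisp x a hx, add_comm, hshift b _ hx]
    ring
  · rw [Equiv.Perm.mul_apply, Equiv.Perm.mul_apply, (ht.2 _).2.1 ((key x b).mp hx),
      hdisp x b hx, add_comm, hshift a _ hx]
    ring
  · rw [Equiv.Perm.mul_apply, Equiv.Perm.mul_apply,
      (ht.2 _).2.2 (mt (key x a).mpr hxa) (mt (key x b).mpr hxb)]
    simp

lemma le_apply (hs : IsAffTranspAt n u v s) (huv : u < v) (hx : ¬ (n : ℤ) ∣ x - v) :
    x ≤ s x := by
  by_cases hxu : (n : ℤ) ∣ x - u
  · rw [(hs.2 x).1 hxu]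
    linarith
  · rw [(hs.2 x).2.2 hxu hx]

lemma apply_le (hs : IsAffTranspAt n u v s) (huv : u < v) (hx : ¬ (n : ℤ) ∣ x - u) :
    s x ≤ x := by
  by_cases hxv : (n : ℤ) ∣ x - v
  · rw [(hs.2 x).2.1 hxv]
    linarith
  · rw [(hs.2 x).2.2 hx hxv]

lemma le_apply_and_apply_le (hs : IsAffTranspAt n u v s) (huv : u < v) (hxy : x < y)
    (hsyx : s y < s x) : x ≤ s x ∧ s y ≤ y := by
  have hsub : y - v + u ≤ s y := by
    by_cases hyv : (n : ℤ) ∣ y - v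
    · rw [(hs.2 y).2.1 hyv]
    · linarith [hs.le_apply huv hyv]
  have hadd : s x ≤ x - u + v := by
    by_cases hxu : (n : ℤ) ∣ x - u
    · rw [(hs.2 x).1 hxu]
    · linarith [hs.apply_le huv hxu]
  refine ⟨hs.le_apply huv fun hxv => ?_, hs.apply_le huv fun hyu => ?_⟩
  · rw [(hs.2 x).2.1 hxv] at hsyx
    linarith
  · rw [(hs.2 y).1 hyu] at hsyx
    linarith

lemma map_apply_le (hs : IsAffTranspAt n u v s) (huv : u < v) (hw : IsAffinePerm n w)
    (hwvu : w v < w u) (hx : x ≤ s x) : w (s x) ≤ w x := by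
  by_cases hxu : (n : ℤ) ∣ x - u
  · have hsx : w (s x) = w v + (x - u) := by
      rw [(hs.2 x).1 hxu, show x - u + v = v + (x - u) by ring, hw.map_add_of_dvd _ hxu]
    have hx' : w x = w u + (x - u) := by simpa using hw.map_add_of_dvd u hxu
    linarith
  by_cases hxv : (n : ℤ) ∣ x - v
  · rw [(hs.2 x).2.1 hxv] at hx
    linarith
  · rw [(hs.2 x).2.2 hxu hxv]

end IsAffTranspAt

def sortedImage (s : Equiv.Perm ℤ) (p : ℤ × ℤ) : ℤ × ℤ :=
  if s p.1 < s p.2 then (s p.1, s p.2) else p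

namespace IsAffTranspAt

lemma sortedImage_diagShift (hs : IsAffTranspAt n u v s) (j : ℤ) (p : ℤ × ℤ) :
    sortedImage s (diagShift n j p) = diagShift n j (sortedImage s p) := by
  simp only [sortedImage, diagShift, hs.isAffinePerm.map_add_mul, add_lt_add_iff_right]
  split_ifs <;> rfl

lemma mapsTo_sortedImage (hs : IsAffTranspAt n u v s) (huv : u < v) (hw : IsAffinePerm n w)
    (hwvu : w v < w u) : Set.MapsTo (sortedImage s) (invPairs (w * s)) (invPairs w) := by
  rintro p ⟨hp, hwp⟩
  rw [Equiv.Perm.mul_apply, Equiv.Perm.mul_apply] at hwp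
  by_cases hsp : s p.1 < s p.2
  · rw [sortedImage, if_pos hsp]
    exact ⟨hsp, hwp⟩
  have hsp' : s p.2 < s p.1 := lt_of_le_of_ne (not_lt.mp hsp) (s.injective.ne hp.ne')
  obtain ⟨h1, h2⟩ := hs.le_apply_and_apply_le huv hp hsp'
  have h3 := hs.map_apply_le huv hw hwvu (x := s p.2) (by rwa [hs.apply_apply])
  rw [hs.apply_apply] at h3
  rw [sortedImage, if_neg hsp]
  exact ⟨hp, by linarith [hs.map_apply_le huv hw hwvu h1]⟩

lemma injOn_sortedImage (hs : IsAffTranspAt n u v s) (w : Equiv.Perm ℤ) :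
    Set.InjOn (sortedImage s) (invPairs (w * s)) := by
  have hmixed : ∀ p q : ℤ × ℤ, p ∈ invPairs (w * s) → ¬ s q.1 < s q.2 → (s p.1, s p.2) ≠ q := by
    rintro p q hp hsq rfl
    simp only [hs.apply_apply] at hsq
    exact hsq hp.1
  intro p hp q hq h
  by_cases hsp : s p.1 < s p.2 <;> by_cases hsq : s q.1 < s q.2 <;>
    simp only [sortedImage, hsp, hsq, if_true, if_false] at h
  · simp only [Prod.mk.injEq, s.injective.eq_iff] at h
    exact Prod.ext h.1 h.2
  · exact absurd h (hmixed p q hp hsq)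
  · exact absurd h.symm (hmixed q p hq hsp)
  · exact h

lemma sortedImage_ne_diagShift (hs : IsAffTranspAt n u v s) (huv : u < v)
    (hw : IsAffinePerm n w) (hwvu : w v < w u) {p : ℤ × ℤ} (hp : p ∈ invPairs (w * s)) (j : ℤ) :
    sortedImage s p ≠ diagShift n j (u, v) := by
  have hsa := hs.isAffinePerm
  intro h
  by_cases hsp : s p.1 < s p.2
  · rw [sortedImage, if_pos hsp] at h
    simp only [diagShift, Prod.mk.injEq] at h
    have h1 : p.1 = v + j * n := by
      rw [← hs.apply_apply p.1, h.1, hsa.map_add_mul, hs.apply_left]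
    have h2 : p.2 = u + j * n := by
      rw [← hs.apply_apply p.2, h.2, hsa.map_add_mul, hs.symm.apply_left]
    linarith [hp.1]
  · rw [sortedImage, if_neg hsp] at h
    have hwp := hp.2
    rw [h] at hwp
    simp only [diagShift, Equiv.Perm.mul_apply, hsa.map_add_mul, hw.map_add_mul,
      hs.apply_left, hs.symm.apply_left] at hwp
    linarith

end IsAffTranspAt

lemma aLen_mul_transp_lt [NeZero n] (hw : IsAffinePerm n w) (hs : IsAffTranspAt n u v s)
    (huv : u < v) (hwvu : w v < w u) : aLen n (w * s) < aLen n w := by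
  rw [aLen_eq_ncard, aLen_eq_ncard]
  exact ncard_window_inter_lt (Nat.pos_of_neZero n)
    (hw.mul hs.isAffinePerm).isDiagPeriodic_invPairs hw.isDiagPeriodic_invPairs
    hw.finite_window_inter_invPairs hs.sortedImage_diagShift
    (hs.mapsTo_sortedImage huv hw hwvu) (hs.injOn_sortedImage w) ⟨huv, hwvu⟩
    fun _ hp j => hs.sortedImage_ne_diagShift huv hw hwvu hp j

lemma aLen_transp_mul_lt [NeZero n] (hw : IsAffinePerm n w) (ht : IsAffTranspAt n a b t)
    (hab : a < b) (hinv : w⁻¹ b < w⁻¹ a) : aLen n (t * w) < aLen n w := by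
  rw [show t * w = w * (w⁻¹ * t * w) by group]
  exact aLen_mul_transp_lt hw (ht.symm.conj hw) hinv (by simpa using hab)

end AffTransp

section Necklace

lemma mem_neckAux_iff_inv_mem [NeZero n] (ρ ι : Equiv.Perm (Fin n)) (m : ℕ) (c : Fin n) :
    c ∈ neckAux n ρ ι m ↔ ι⁻¹ c ∈ neckAux n (ι⁻¹ * ρ) 1 m := by
  induction m generalizing c with
  | zero => simp [neckAux]
  | succ m ih => simp [neckAux, ih, Equiv.symm_apply_eq]

def Covers (n : ℕ) (g : Equiv.Perm ℤ) (a : Fin n) (m : ℤ) : Prop :=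
  ∃ p, p ≡ oneBased a [ZMOD n] ∧ p ≤ m ∧ m < g p

variable {σ : Equiv.Perm (Fin n)} {g : Equiv.Perm ℤ} {a : Fin n}

lemma covers_iff_of_modEq (hg : IsAffinePerm n g) {m m' : ℤ} (h : m ≡ m' [ZMOD n]) :
    Covers n g a m ↔ Covers n g a m' := by
  suffices ∀ m m', m ≡ m' [ZMOD n] → Covers n g a m → Covers n g a m' from
    ⟨this m m' h, this m' m h.symm⟩
  rintro m m' h ⟨p, hp, hpm, hgp⟩
  refine ⟨p + (m' - m), ?_, by linarith, by rw [hg.map_add_of_dvd _ h.dvd]; linarith⟩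
  exact (Int.modEq_iff_dvd.mpr (by simpa using h.dvd)).symm.trans hp

lemma covers_zero_iff (hg : IsLift n σ g) : Covers n g a 0 ↔ σ a ≤ a := by
  have hga := hg.2 a
  have := (σ a).isLt
  have := one_le_oneBased a
  have := oneBased_le a
  constructor
  · rintro ⟨p, hp, hp0, hgp⟩
    by_contra h
    have hp' := hp.le_sub_of_lt (by linarith)
    have hdisp := hg.1.sub_eq_of_modEq hp
    rw [if_pos (by simpa using h)] at hga
    unfold oneBased at *
    linarith
  · intro h
    refine ⟨oneBased a - n, Int.sub_modulus_modEq_iff.mpr Int.ModEq.rfl, by linarith, ?_⟩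
    have := hg.1 (oneBased a - n)
    rw [sub_add_cancel] at this
    rw [if_neg (by simpa using h)] at hga
    unfold oneBased at *
    linarith

lemma covers_succ_iff [NeZero n] (hg : IsLift n σ g) (m : ℤ) :
    Covers n g a (m + 1) ↔
      m + 1 ≡ oneBased a [ZMOD n] ∨ (¬ m + 1 ≡ oneBased (σ a) [ZMOD n] ∧ Covers n g a m) := by
  have hend : ∀ p, p ≡ oneBased a [ZMOD n] →
      (m + 1 ≡ oneBased (σ a) [ZMOD n] ↔ m + 1 ≡ g p [ZMOD n]) := fun p hp =>
    ⟨fun h => h.trans (hg.apply_modEq hp).symm, fun h => h.trans (hg.apply_modEq hp)⟩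
  constructor
  · rintro ⟨p, hp, hpm, hgp⟩
    rcases eq_or_lt_of_le hpm with rfl | hlt
    · exact Or.inl hp
    refine Or.inr ⟨fun h => ?_, p, hp, by linarith, by linarith⟩
    have := ((hend p hp).mp h).le_sub_of_lt hgp
    linarith [(hg.bounded p).2]
  · rintro (h | ⟨hnot, p, hp, hpm, hgp⟩)
    · exact ⟨m + 1, h, le_rfl, (hg.bounded _).1⟩
    refine ⟨p, hp, by linarith, lt_of_le_of_ne hgp fun h => hnot ?_⟩
    rw [hend p hp, h]

open Fin.NatCast in
lemma mem_neckAux_inv_one_iff_covers [NeZero n] (hg : IsLift n σ g) (m : ℕ) (a : Fin n) :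
    a ∈ neckAux n σ⁻¹ 1 m ↔ Covers n g a m := by
  induction m generalizing a with
  | zero => simp [neckAux, covers_zero_iff hg]
  | succ m ih =>
    have hm : ∀ b : Fin n, (m + 1 : ℤ) ≡ oneBased b [ZMOD n] ↔ b = (m : Fin n) := fun b => by
      rw [eq_comm, ← oneBased_modEq_iff]
      exact ⟨(oneBased_natCast_modEq m).trans, (oneBased_natCast_modEq m).symm.trans⟩
    simp only [neckAux, Finset.mem_insert, Finset.mem_erase, ih, Nat.cast_succ,
      covers_succ_iff hg, hm, Equiv.Perm.one_apply, ne_eq, Equiv.Perm.eq_inv_iff_eq]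

lemma mem_necklace_iff_covers [NeZero n] {π ι : Equiv.Perm (Fin n)}
    (hg : IsLift n (ι⁻¹ * π * ι) g) (j c : Fin n) :
    c ∈ necklace n (π⁻¹ * ι) ι j ↔ Covers n g (ι⁻¹ c) j.val := by
  rw [necklace, mem_neckAux_iff_inv_mem, show ι⁻¹ * (π⁻¹ * ι) = (ι⁻¹ * π * ι)⁻¹ by group,
    mem_neckAux_inv_one_iff_covers hg]

end Necklace

section Selection

variable {ι : Equiv.Perm (Fin n)} {i g : Equiv.Perm ℤ}

lemma Covers.exists_arc_between (hg : IsAffinePerm n g) {a : Fin n} {m m' V W : ℤ}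
    (hV : V ≡ m [ZMOD n]) (hW : W ≡ m' [ZMOD n]) (hWV : W < V) (hVW : V < W + n)
    (hcov : Covers n g a m) (hncov : ¬ Covers n g a m') :
    ∃ p, p ≡ oneBased a [ZMOD n] ∧ W < p ∧ p ≤ V ∧ V < g p ∧ g p ≤ W + n := by
  obtain ⟨p, hp, hpV, hVp⟩ := (covers_iff_of_modEq hg hV).mpr hcov
  have hW' := mt (covers_iff_of_modEq hg hW).mp hncov
  have hWn := mt (covers_iff_of_modEq hg (Int.add_modulus_modEq_iff.mpr hW)).mp hncov
  refine ⟨p, hp, ?_, hpV, hVp, ?_⟩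
  · by_contra h
    exact hW' ⟨p, hp, not_lt.mp h, by linarith⟩
  · by_contra h
    exact hWn ⟨p, hp, by linarith, not_le.mp h⟩

lemma exists_pair_or_interleaved (hi : IsLift n ι i) (hg : IsAffinePerm n g) {X Y : Fin n}
    (hXY : X ≠ Y) {p q : ℤ} (hp : i p ≡ oneBased Y [ZMOD n]) (hq : i q ≡ oneBased X [ZMOD n])
    (hqp : q < p) (hpq : p < q + n) (hgqp : g q < g p) (hgpq : g p < g q + n) :
    (∃ x y, x < y ∧ g x < g y ∧ i y < i x ∧ ¬ (n : ℤ) ∣ i x - i y) ∨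
      (i q < i p ∧ i p < i q + n) := by
  have hne : ¬ i q ≡ i p [ZMOD n] := fun h =>
    hXY (oneBased_modEq_iff.mp (hq.symm.trans (h.trans hp)))
  by_cases h1 : i p < i q
  · exact Or.inl ⟨q, p, hqp, hgqp, h1, fun h => hne (Int.modEq_iff_dvd.mpr h).symm⟩
  by_cases h2 : i q + n < i p
  · refine Or.inl ⟨p, q + n, hpq, by rwa [hg q], by rwa [hi.1 q], fun h => hne ?_⟩
    rw [hi.1 q] at h
    exact Int.add_modulus_modEq_iff.mp (Int.modEq_iff_dvd.mpr h)
  refine Or.inr ⟨lt_of_le_of_ne (not_lt.mp h1) fun h => hne (h ▸ Int.ModEq.rfl),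
    lt_of_le_of_ne (not_lt.mp h2) fun h => hne ?_⟩
  rw [h]
  exact Int.modEq_add_modulus_iff.mpr Int.ModEq.rfl

lemma not_cyclicOrdered_of_interleaved [NeZero n] {A B C D : Fin n} {a b c d : ℤ}
    (ha : a ≡ oneBased A [ZMOD n]) (hb : b ≡ oneBased B [ZMOD n])
    (hc : c ≡ oneBased C [ZMOD n]) (hd : d ≡ oneBased D [ZMOD n])
    (hab : b < a ∧ a < b + n) (hcb : b < c ∧ c < b + n)
    (had : d < a ∧ a < d + n) (hcd : d < c ∧ c < d + n) :
    ¬ CyclicOrdered n A B C D := by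
  have hpos : ∀ {X : Fin n} {x : ℤ}, x ≡ oneBased X [ZMOD n] → (cPos n A X : ℤ) = (x - a) % n :=
    fun hx => by rw [cPos_eq_emod]; exact (hx.sub ha).symm
  have hbelow : ∀ {x : ℤ}, x < a → a < x + n → (x - a) % n = x - a + n := fun h1 h2 =>
    Int.emod_eq_of_modEq (Int.modEq_add_modulus_iff.mpr Int.ModEq.rfl) (by linarith) (by linarith)
  rintro ⟨h1, h2, h3⟩
  have h1' : (0 : ℤ) < cPos n A B := by exact_mod_cast h1
  have h2' : (cPos n A B : ℤ) < cPos n A C := by exact_mod_cast h2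
  have h3' : (cPos n A C : ℤ) < cPos n A D := by exact_mod_cast h3
  rw [hpos hb, hbelow hab.1 hab.2] at h1' h2'
  rw [hpos hc] at h2' h3'
  rw [hpos hd, hbelow had.1 had.2] at h3'
  rcases lt_trichotomy c a with hca | rfl | hac
  · rw [hbelow hca (by linarith)] at h3'
    linarith
  · simp at h2'
    linarith
  · rw [Int.emod_eq_of_lt (by linarith) (by linarith)] at h2'
    linarith

lemma CyclicOrdered.ne [NeZero n] {A B C D : Fin n} (h : CyclicOrdered n A B C D) :
    B ≠ A ∧ D ≠ A ∧ B ≠ C ∧ D ≠ C := by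
  obtain ⟨h1, h2, h3⟩ := h
  have hA : cPos n A A = 0 := by simp [cPos]
  refine ⟨?_, ?_, ?_, ?_⟩ <;> rintro rfl <;> omega

lemma exists_modEq_lt_lt_add {v w : Fin n} (h : v ≠ w) :
    ∃ V W : ℤ, V ≡ v.val [ZMOD n] ∧ W ≡ w.val [ZMOD n] ∧ W < V ∧ V < W + n := by
  have := v.isLt
  have := w.isLt
  rcases lt_or_gt_of_ne (Fin.val_ne_of_ne h) with h | h
  · exact ⟨v.val + n, w.val, Int.add_modulus_modEq_iff.mpr Int.ModEq.rfl, Int.ModEq.rfl,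
      by omega, by omega⟩
  · exact ⟨v.val, w.val, Int.ModEq.rfl, Int.ModEq.rfl, by omega, by omega⟩

lemma exists_pair_of_not_weaklySeparated [NeZero n] {π : Equiv.Perm (Fin n)}
    (hi : IsLift n ι i) (hg : IsLift n (ι⁻¹ * π * ι) g)
    (hns : ¬ ∀ a b : Fin n,
      WeaklySeparated n (necklace n (π⁻¹ * ι) ι a) (necklace n (π⁻¹ * ι) ι b)) :
    ∃ x y, x < y ∧ g x < g y ∧ i y < i x ∧ ¬ (n : ℤ) ∣ i x - i y := by
  simp only [not_forall, WeaklySeparated, not_not] at hns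
  obtain ⟨v, w, A, B, C, D, hcyc, hAv, hAw, hCv, hCw, hBw, hBv, hDw, hDv⟩ := hns
  simp only [mem_necklace_iff_covers hg] at hAv hAw hCv hCw hBw hBv hDw hDv
  obtain ⟨V, W, hV, hW, hWV, hVW⟩ :=
    exists_modEq_lt_lt_add (v := v) (w := w) fun h => hAw (h ▸ hAv)
  have hV' : V - n ≡ v.val [ZMOD n] := Int.sub_modulus_modEq_iff.mpr hV
  obtain ⟨pA, hpA, hpA'⟩ := Covers.exists_arc_between hg.1 hV hW hWV hVW hAv hAw
  obtain ⟨pC, hpC, hpC'⟩ := Covers.exists_arc_between hg.1 hV hW hWV hVW hCv hCw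
  obtain ⟨qB, hqB, hqB'⟩ :=
    Covers.exists_arc_between hg.1 hW hV' (by linarith) (by linarith) hBw hBv
  obtain ⟨qD, hqD, hqD'⟩ :=
    Covers.exists_arc_between hg.1 hW hV' (by linarith) (by linarith) hDw hDv
  have hres : ∀ {X : Fin n} {p : ℤ}, p ≡ oneBased (ι⁻¹ X) [ZMOD n] → i p ≡ oneBased X [ZMOD n] :=
    fun h => by simpa using hi.apply_modEq h
  obtain ⟨hBA, hDA, hBC, hDC⟩ := hcyc.ne
  by_contra hno
  have interleaved : ∀ {X Y : Fin n} {p q : ℤ}, X ≠ Y → p ≡ oneBased (ι⁻¹ Y) [ZMOD n] →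
      q ≡ oneBased (ι⁻¹ X) [ZMOD n] → W < p ∧ p ≤ V ∧ V < g p ∧ g p ≤ W + n →
      V - n < q ∧ q ≤ W ∧ W < g q ∧ g q ≤ V - n + n → i q < i p ∧ i p < i q + n := by
    intro X Y p q hXY hp hq ⟨_, _, _, _⟩ ⟨_, _, _, _⟩
    exact (exists_pair_or_interleaved hi hg.1 hXY (hres hp) (hres hq) (by linarith)
      (by linarith) (by linarith) (by linarith)).resolve_left hno
  exact not_cyclicOrdered_of_interleaved (hres hpA) (hres hqB) (hres hpC) (hres hqD)
    (interleaved hBA hpA hqB hpA' hqB') (interleaved hBC hpC hqB hpC' hqB')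
    (interleaved hDA hpA hqD hpA' hqD') (interleaved hDC hpC hqD hpC' hqD') hcyc

end Selection

lemma exists_common_left_reflection [NeZero n] {f i : Equiv.Perm ℤ} (hf : IsAffinePerm n f)
    (hi : IsAffinePerm n i) {x y : ℤ} (hxy : x < y) (hg : (i⁻¹ * f * i) x < (i⁻¹ * f * i) y)
    (hiyx : i y < i x) (hmod : ¬ (n : ℤ) ∣ i x - i y) :
    ∃ t : Equiv.Perm ℤ, IsAffTransp n t ∧
      aLen n (t * (f⁻¹ * i)) < aLen n (f⁻¹ * i) ∧ aLen n (t * i) < aLen n i := by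
  obtain ⟨t, ht⟩ := exists_isAffTranspAt hmod
  refine ⟨t, ⟨_, _, ht⟩, aLen_transp_mul_lt (hf.inv.mul hi) ht hiyx ?_,
    aLen_transp_mul_lt hi ht hiyx (by simpa using hxy)⟩
  simpa using hg

end

theorem not_weakly_separated_gives_common_left_reflection_general
    (n : ℕ) [NeZero n] (π ι : Equiv.Perm (Fin n)) (f i : Equiv.Perm ℤ)
    (hf : IsLift n π f)
    (hi : IsLift n ι i)
    (hle : LeR n i f)
    (hns : ¬ ∀ a b : Fin n,
        WeaklySeparated n (necklace n (π⁻¹ * ι) ι a) (necklace n (π⁻¹ * ι) ι b)) :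
    ∃ t : Equiv.Perm ℤ, IsAffTransp n t ∧
      aLen n (t * (f⁻¹ * i)) < aLen n (f⁻¹ * i) ∧
      aLen n (t * i) < aLen n i := by
  have hg := hf.conj hi (hle.conj_bounded hi.1 hf.1 hf.bounded)
  obtain ⟨x, y, hxy, hgxy, hiyx, hmod⟩ := exists_pair_of_not_weaklySeparated hi hg hns
  exact exists_common_left_reflection hf.1 hi.1 hxy hgxy hiyx hmod

/-- If the Grassmannlike necklace `𝓘_{•,ι,π}` is not weakly separated, then
(with `r = f⁻¹·i`) there is an affine transposition `t` with `ℓ(t·r) < ℓ(r)` and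
`ℓ(t·i) < ℓ(i)`. -/
theorem not_weakly_separated_gives_common_left_reflection
    (n k : ℕ) [NeZero n] (π ι : Equiv.Perm (Fin n)) (f i : Equiv.Perm ℤ)
    (hπ : IsType k n π) (hι : IsType k n ι)
    (hf : IsLift n π f) (hfB : f ∈ Bound k n)
    (hi : IsLift n ι i) (hiB : i ∈ Bound k n)
    (hle : LeR n i f)
    (hns : ¬ ∀ a b : Fin n,
        WeaklySeparated n (necklace n (π⁻¹ * ι) ι a) (necklace n (π⁻¹ * ι) ι b)) :
    ∃ t : Equiv.Perm ℤ, IsAffTransp n t ∧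
      aLen n (t * (f⁻¹ * i)) < aLen n (f⁻¹ * i) ∧
      aLen n (t * i) < aLen n i :=
  not_weakly_separated_gives_common_left_reflection_general n π ι f i hf hi hle hns
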